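/- arXiv:1809.00077 — 4 statements merged into one kernel-verified Lean document; each statement's English description precedes it below -/
import Mathlib

section
/- Let d : X × X → ℝ be a metric, v_min > 0 a lower bound on all velocities v_i, and define delivery times by T(q_1) = (d(p_1,s) + d(s,q_1))/v_1 and T(q_i) = max(T(q_{i-1}), d(p_i, q_{i-1})/v_i) + d(q_{i-1}, q_i)/v_i. Then T(q_ℓ) is Lipschitz-continuous in (q_1,...,q_{ℓ-1}) ∈ X^{ℓ-1} (sup metric) with Lipschitz constant at most 2ℓ/v_min. -/
/-- Delivery time of a schedule: agent `i+1` (velocity `v (i+1)`, start `p (i+1)`)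
walks to the previous drop-off `q i` (possibly waiting) and carries the package
to `q (i+1)`; here `q 0 = s`. -/
noncomputable def schedTime {X : Type*} [MetricSpace X]
    (v : ℕ → ℝ) (p : ℕ → X) (q : ℕ → X) : ℕ → ℝ
  | 0 => 0
  | n + 1 => max (schedTime v p q n) (dist (p (n + 1)) (q n) / v (n + 1))
      + dist (q n) (q (n + 1)) / v (n + 1)

/-- The delivery time `T(q_ℓ)` is Lipschitz in the drop-off points `q_1, …, q_{ℓ-1}`
(sup metric) with Lipschitz constant at most `2 ℓ / v_min`. -/
theorem schedTime_lipschitz {X : Type*} [MetricSpace X]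
    (ℓ : ℕ) (v : ℕ → ℝ) (vmin : ℝ) (hvmin : 0 < vmin)
    (p : ℕ → X) (q q' : ℕ → X) (r : ℝ)
    (hv : ∀ i, i ≤ ℓ → vmin ≤ v i)
    (h0 : q 0 = q' 0) (hℓ : q ℓ = q' ℓ)
    (hr : ∀ i, i ≤ ℓ → dist (q i) (q' i) ≤ r) :
    |schedTime v p q ℓ - schedTime v p q' ℓ| ≤ 2 * ℓ / vmin * r := by
  have hr0 : 0 ≤ r := le_trans dist_nonneg (hr 0 (Nat.zero_le ℓ))
  suffices H : ∀ n, n ≤ ℓ → |schedTime v p q n - schedTime v p q' n| ≤ 2 * n / vmin * r by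
    exact H ℓ le_rfl
  intro n hn
  induction n with
  | zero => simp [schedTime]
  | succ n ih =>
    have hn' : n ≤ ℓ := le_of_lt hn
    have ih := ih hn'
    have hv1 : vmin ≤ v (n+1) := hv (n+1) hn
    have hv1' : 0 < v (n+1) := lt_of_lt_of_le hvmin hv1
    have hdq : dist (q n) (q' n) ≤ r := hr n hn'
    have hdq1 : dist (q (n+1)) (q' (n+1)) ≤ r := hr (n+1) hn
    -- bound on the max term
    have hmax : |max (schedTime v p q n) (dist (p (n + 1)) (q n) / v (n + 1))
        - max (schedTime v p q' n) (dist (p (n + 1)) (q' n) / v (n + 1))|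
        ≤ 2 * n / vmin * r := by
      refine le_trans (abs_max_sub_max_le_max _ _ _ _) (max_le ih ?_)
      rcases Nat.eq_zero_or_pos n with h | h
      · subst h
        rw [h0]
        simp
      · have h1 : |dist (p (n+1)) (q n) / v (n+1) - dist (p (n+1)) (q' n) / v (n+1)|
            = |dist (p (n+1)) (q n) - dist (p (n+1)) (q' n)| / v (n+1) := by
          rw [div_sub_div_same, abs_div, abs_of_pos hv1']
        rw [h1]
        have h2 : |dist (p (n+1)) (q n) - dist (p (n+1)) (q' n)| ≤ r := by
          refine le_trans ?_ hdq
          rw [dist_comm (p (n+1)) (q n), dist_comm (p (n+1)) (q' n)]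
          exact abs_dist_sub_le _ _ _
        calc |dist (p (n+1)) (q n) - dist (p (n+1)) (q' n)| / v (n+1) ≤ r / vmin :=
              div_le_div₀ hr0 h2 hvmin hv1
          _ = 1 / vmin * r := by ring
          _ ≤ 2 * n / vmin * r := by
              gcongr
              have : (1:ℝ) ≤ (n:ℝ) := by exact_mod_cast h
              linarith
    -- bound on the pure travel term
    have htrav : |dist (q n) (q (n+1)) / v (n+1) - dist (q' n) (q' (n+1)) / v (n+1)|
        ≤ 2 * r / vmin := by
      rw [div_sub_div_same, abs_div, abs_of_pos hv1']
      have h3 : |dist (q n) (q (n+1)) - dist (q' n) (q' (n+1))| ≤ 2 * r := by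
        calc |dist (q n) (q (n+1)) - dist (q' n) (q' (n+1))|
            ≤ |dist (q n) (q (n+1)) - dist (q' n) (q (n+1))|
              + |dist (q' n) (q (n+1)) - dist (q' n) (q' (n+1))| :=
              abs_sub_le _ _ _
          _ ≤ dist (q n) (q' n) + dist (q (n+1)) (q' (n+1)) := by
              gcongr
              · exact abs_dist_sub_le _ _ _
              · rw [dist_comm (q' n) (q (n+1)), dist_comm (q' n) (q' (n+1))]
                exact abs_dist_sub_le _ _ _
          _ ≤ r + r := add_le_add hdq hdq1
          _ = 2 * r := by ring
      exact div_le_div₀ (by positivity) h3 hvmin hv1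
    have heq : schedTime v p q (n+1) - schedTime v p q' (n+1)
        = (max (schedTime v p q n) (dist (p (n + 1)) (q n) / v (n + 1))
            - max (schedTime v p q' n) (dist (p (n + 1)) (q' n) / v (n + 1)))
          + (dist (q n) (q (n+1)) / v (n+1) - dist (q' n) (q' (n+1)) / v (n+1)) := by
      simp only [schedTime]; ring
    rw [heq]
    calc |_ + _| ≤ _ := abs_add_le _ _
      _ ≤ 2 * n / vmin * r + 2 * r / vmin := add_le_add hmax htrav
      _ = 2 * (n + 1 : ℕ) / vmin * r := by push_cast; ring
end

section
/- Suppose all agents have the same velocity v > 0, agent closest to the source s is at distance δ from s, and any involved agent i starting at p_i picks up the package at point q_i^+. If the overall delivery time equals the optimum (δ + d(s,t))/v, then for every involved agent i: d(s, q_i^+) + d(q_i^+, t) = d(s,t) (the pick-up lies on a shortest s–t path) and d(p_i, q_i^+) ≤ δ + d(s, q_i^+). -/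
section

variable {X : Type*} [MetricSpace X]

theorem schedTime_add_dist_div_le_succ (v : ℕ → ℝ) (p q : ℕ → X) (n : ℕ) :
    schedTime v p q n + dist (q n) (q (n + 1)) / v (n + 1) ≤ schedTime v p q (n + 1) := by
  rw [schedTime]
  gcongr
  exact le_max_left _ _

theorem dist_div_add_dist_div_le_schedTime_succ (v : ℕ → ℝ) (p q : ℕ → X) (n : ℕ) :
    dist (p (n + 1)) (q n) / v (n + 1) + dist (q n) (q (n + 1)) / v (n + 1)
      ≤ schedTime v p q (n + 1) := by
  rw [schedTime]
  gcongr
  exact le_max_right _ _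

variable {v : ℝ} {p q : ℕ → X}

theorem schedTime_add_dist_div_le (hv : 0 ≤ v) {m n : ℕ} (hmn : m ≤ n) :
    schedTime (fun _ => v) p q m + dist (q m) (q n) / v ≤ schedTime (fun _ => v) p q n := by
  induction n, hmn using Nat.le_induction with
  | base => simp
  | succ n _ ih =>
    have hstep := schedTime_add_dist_div_le_succ (fun _ => v) p q n
    have htri : dist (q m) (q (n + 1)) / v
        ≤ dist (q m) (q n) / v + dist (q n) (q (n + 1)) / v := by
      rw [← add_div]
      exact div_le_div_of_nonneg_right (dist_triangle _ _ _) hv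
    linarith

theorem dist_add_dist_div_le_schedTime (hv : 0 ≤ v) {i n : ℕ} (hin : i < n) :
    (dist (p (i + 1)) (q i) + dist (q i) (q n)) / v ≤ schedTime (fun _ => v) p q n :=
  calc (dist (p (i + 1)) (q i) + dist (q i) (q n)) / v
      ≤ dist (p (i + 1)) (q i) / v + dist (q i) (q (i + 1)) / v + dist (q (i + 1)) (q n) / v := by
        rw [← add_div, ← add_div, add_assoc]
        gcongr
        exact dist_triangle _ _ _
    _ ≤ schedTime (fun _ => v) p q (i + 1) + dist (q (i + 1)) (q n) / v := by
        gcongr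
        exact dist_div_add_dist_div_le_schedTime_succ (fun _ => v) p q i
    _ ≤ schedTime (fun _ => v) p q n := schedTime_add_dist_div_le hv hin

theorem add_dist_div_le_schedTime (hv : 0 ≤ v) {δ : ℝ} (hδ : δ ≤ dist (p 1) (q 0))
    {n : ℕ} (hn : 0 < n) :
    (δ + dist (q 0) (q n)) / v ≤ schedTime (fun _ => v) p q n :=
  calc (δ + dist (q 0) (q n)) / v ≤ (dist (p (0 + 1)) (q 0) + dist (q 0) (q n)) / v := by
        gcongr
    _ ≤ schedTime (fun _ => v) p q n := dist_add_dist_div_le_schedTime hv hn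

end

theorem uniform_velocity_pickup_characterization_general {X : Type*} [MetricSpace X]
    (v δ : ℝ) (hv : 0 < v)
    (ℓ : ℕ) (p q : ℕ → X) (s t : X)
    (hq0 : q 0 = s) (hqℓ : q ℓ = t)
    (hδ : ∀ i, 1 ≤ i → i ≤ ℓ → δ ≤ dist (p i) s)
    (hopt : schedTime (fun _ => v) p q ℓ = (δ + dist s t) / v) :
    ∀ i, i < ℓ →
      dist s (q i) + dist (q i) t = dist s t ∧
      dist (p (i + 1)) (q i) ≤ δ + dist s (q i) := by
  intro i hi
  subst hq0 hqℓ
  have hδ1 : δ ≤ dist (p 1) (q 0) := hδ 1 le_rfl (by omega)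
  have hpickup := dist_add_dist_div_le_schedTime (p := p) (q := q) hv.le hi
  rw [hopt, div_le_div_iff_of_pos_right hv] at hpickup
  refine ⟨le_antisymm ?_ (dist_triangle _ _ _), by linarith [dist_triangle (q 0) (q i) (q ℓ)]⟩
  rcases Nat.eq_zero_or_pos i with rfl | hi0
  · simp
  · have hrest := schedTime_add_dist_div_le (p := p) (q := q) hv.le hi.le
    have hreach := add_dist_div_le_schedTime hv.le hδ1 hi0
    have hslack : (δ + dist (q 0) (q i) + dist (q i) (q ℓ)) / v
        ≤ (δ + dist (q 0) (q ℓ)) / v := by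
      rw [add_div _ (dist (q i) (q ℓ)), ← hopt]
      linarith
    rw [div_le_div_iff_of_pos_right hv] at hslack
    linarith

/-- Uniform velocities: if a schedule achieves the optimum delivery time
`(δ + d(s,t))/v`, then every involved agent picks up the package on a shortest
`s`–`t` path, and can reach its pick-up point no later than the package. -/
theorem uniform_velocity_pickup_characterization {X : Type*} [MetricSpace X]
    (v δ : ℝ) (hv : 0 < v) (hδ0 : 0 ≤ δ)
    (ℓ : ℕ) (hℓ : 1 ≤ ℓ) (p q : ℕ → X) (s t : X)
    (hq0 : q 0 = s) (hqℓ : q ℓ = t)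
    (hδ : ∀ i, 1 ≤ i → i ≤ ℓ → δ ≤ dist (p i) s)
    (hopt : schedTime (fun _ => v) p q ℓ = (δ + dist s t) / v) :
    ∀ i, i < ℓ →
      dist s (q i) + dist (q i) t = dist s t ∧
      dist (p (i + 1)) (q i) ≤ δ + dist s (q i) :=
  uniform_velocity_pickup_characterization_general v δ hv ℓ p q s t hq0 hqℓ hδ hopt
end

section
/- Single-agent 3-approximation inequality: let agents 1,...,ℓ carry the package distances d_1*,...,d_ℓ* > 0 with cost rates c_j = ε/v_j + (1−ε)·ω_j, and suppose c_i = min_j c_j where i = ℓ is the last agent. Then the extra cost of letting agent i retrace all earlier segments, namely 2·(Σ_{j=1}^{ℓ−1} d_j*)·c_i, is at most 2·Σ_{j=1}^{ℓ} d_j*·c_j ≤ 2·(ε·T + (1−ε)·E). Hence the single agent i delivers with objective at most 3·(ε·T + (1−ε)·E). -/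
/-- Single-agent 3-approximation: if the last agent `ℓ` attains the minimum cost rate
`c ℓ = min_j c j`, then the cost of retracing the earlier segments is at most
`2·∑_j d*_j·c_j ≤ 2·(ε·T + (1-ε)·E)`, and hence the single-agent schedule has
combined objective at most `3·(ε·T + (1-ε)·E)`. -/
theorem single_agent_three_approx (ε : ℝ) (hε : ε ∈ Set.Ioo (0 : ℝ) 1)
    (ℓ : ℕ) (hℓ : 1 ≤ ℓ) (v ω dstar c : ℕ → ℝ)
    (hv : ∀ j, 1 ≤ j → j ≤ ℓ → 0 < v j) (hω : ∀ j, 1 ≤ j → j ≤ ℓ → 0 ≤ ω j)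
    (hd : ∀ j, 1 ≤ j → j ≤ ℓ → 0 < dstar j)
    (hc : ∀ j, c j = ε / v j + (1 - ε) * ω j)
    (hmin : ∀ j, 1 ≤ j → j ≤ ℓ → c ℓ ≤ c j)
    (T E : ℝ)
    (hT : ∑ j ∈ Finset.Icc 1 ℓ, dstar j / v j ≤ T)
    (hE : ∑ j ∈ Finset.Icc 1 ℓ, ω j * dstar j ≤ E) :
    2 * (∑ j ∈ Finset.Icc 1 (ℓ - 1), dstar j) * c ℓ
        ≤ 2 * ∑ j ∈ Finset.Icc 1 ℓ, dstar j * c j ∧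
    2 * (∑ j ∈ Finset.Icc 1 ℓ, dstar j * c j) ≤ 2 * (ε * T + (1 - ε) * E) ∧
    (ε * T + (1 - ε) * E) + 2 * (∑ j ∈ Finset.Icc 1 (ℓ - 1), dstar j) * c ℓ
        ≤ 3 * (ε * T + (1 - ε) * E) := by
  obtain ⟨hε0, hε1⟩ := hε
  have hε1' : (0:ℝ) ≤ 1 - ε := by linarith
  have hcpos : ∀ j, 1 ≤ j → j ≤ ℓ → 0 ≤ c j := by
    intro j h1 h2
    rw [hc j]
    have := hv j h1 h2
    have := hω j h1 h2
    positivity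
  -- part 1
  have h1 : (∑ j ∈ Finset.Icc 1 (ℓ - 1), dstar j) * c ℓ
      ≤ ∑ j ∈ Finset.Icc 1 ℓ, dstar j * c j := by
    rw [Finset.sum_mul]
    calc ∑ j ∈ Finset.Icc 1 (ℓ - 1), dstar j * c ℓ
        ≤ ∑ j ∈ Finset.Icc 1 (ℓ - 1), dstar j * c j := by
          apply Finset.sum_le_sum
          intro j hj
          rw [Finset.mem_Icc] at hj
          have hj2 : j ≤ ℓ := hj.2.trans (Nat.sub_le ℓ 1)
          exact mul_le_mul_of_nonneg_left (hmin j hj.1 hj2) (hd j hj.1 hj2).le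
      _ ≤ ∑ j ∈ Finset.Icc 1 ℓ, dstar j * c j := by
          apply Finset.sum_le_sum_of_subset_of_nonneg
          · exact Finset.Icc_subset_Icc_right (Nat.sub_le ℓ 1)
          · intro j hj _
            rw [Finset.mem_Icc] at hj
            exact mul_nonneg (hd j hj.1 hj.2).le (hcpos j hj.1 hj.2)
  -- part 2
  have h2 : (∑ j ∈ Finset.Icc 1 ℓ, dstar j * c j) ≤ ε * T + (1 - ε) * E := by
    have heq : ∑ j ∈ Finset.Icc 1 ℓ, dstar j * c j
        = ε * (∑ j ∈ Finset.Icc 1 ℓ, dstar j / v j)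
          + (1 - ε) * (∑ j ∈ Finset.Icc 1 ℓ, ω j * dstar j) := by
      rw [Finset.mul_sum, Finset.mul_sum, ← Finset.sum_add_distrib]
      apply Finset.sum_congr rfl
      intro j hj
      rw [hc j]
      field_simp
    rw [heq]
    have := mul_le_mul_of_nonneg_left hT hε0.le
    have := mul_le_mul_of_nonneg_left hE hε1'
    linarith
  refine ⟨by linarith, by linarith, by linarith⟩
end

section
/- On the real line with uniform velocity v, suppose in an optimal schedule an agent i picks up the package at a point q_i^+ strictly between q_i (its earliest no-delay pick-up point) and its start p_i, from a predecessor agent j with ω_j > ω_i. Then: (a) if 2ω_i < ω_j, moving the pick-up point left by ε > 0 (within the open interval) changes the energy by (2ω_i − ω_j)·ε < 0; (b) if 2ω_i > ω_j, moving it right by ε changes the energy by (ω_j − 2ω_i)·ε < 0. Hence in an energy-optimal schedule with 2ω_i ≠ ω_j, the pick-up point is an endpoint: q_i^+ ∈ {q_i, p_i}. -/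
/-- In-edge handover on the line with uniform velocity: with agent `j` (weight `ωj`)
carrying the package rightwards to the pick-up `x` and agent `i` (weight `ωi`)
walking from `pi` to `x` and back while carrying, the local energy is
`E x = ωj·(x − q0) + ωi·2·(pi − x)`. Moving `x` left (resp. right) by `ε` changes the
energy by `(2ωi − ωj)·ε` (resp. `(ωj − 2ωi)·ε`), which is negative when `2ωi < ωj`
(resp. `2ωi > ωj`); hence if `2ωi ≠ ωj`, any energy-minimizing pick-up point on
`[qi, pi]` is an endpoint. -/
theorem inedge_pickup_endpoint (ωi ωj q0 qi pi : ℝ) (hqp : qi < pi)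
    (Eloc : ℝ → ℝ) (hE : ∀ x, Eloc x = ωj * (x - q0) + ωi * (2 * (pi - x))) :
    (∀ x ε : ℝ, 0 < ε →
      Eloc (x - ε) - Eloc x = (2 * ωi - ωj) * ε ∧
      (2 * ωi < ωj → (2 * ωi - ωj) * ε < 0)) ∧
    (∀ x ε : ℝ, 0 < ε →
      Eloc (x + ε) - Eloc x = (ωj - 2 * ωi) * ε ∧
      (ωj < 2 * ωi → (ωj - 2 * ωi) * ε < 0)) ∧
    (2 * ωi ≠ ωj → ∀ x ∈ Set.Icc qi pi,
      IsMinOn Eloc (Set.Icc qi pi) x → x = qi ∨ x = pi) := by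
  refine ⟨?_, ?_, ?_⟩
  · intro x ε hε
    constructor
    · rw [hE, hE]; ring
    · intro h; exact mul_neg_of_neg_of_pos (by linarith) hε
  · intro x ε hε
    constructor
    · rw [hE, hE]; ring
    · intro h; exact mul_neg_of_neg_of_pos (by linarith) hε
  · intro hne x hx hmin
    by_contra hcon
    push_neg at hcon
    obtain ⟨h1, h2⟩ := hcon
    have hxq : qi < x := lt_of_le_of_ne hx.1 (Ne.symm h1)
    have hxp : x < pi := lt_of_le_of_ne hx.2 h2
    have hq := hmin (Set.left_mem_Icc.mpr hqp.le)
    have hp := hmin (Set.right_mem_Icc.mpr hqp.le)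
    simp only [Set.mem_setOf_eq, hE] at hq hp
    have e1 : (ωj - 2 * ωi) * (x - qi) ≤ 0 := by nlinarith
    have e2 : (ωj - 2 * ωi) * (pi - x) ≥ 0 := by nlinarith
    rcases lt_trichotomy (ωj - 2 * ωi) 0 with h|h|h
    · nlinarith
    · exact hne (by linarith)
    · nlinarith
end
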